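/- arXiv:2003.13667 — 3 statements merged into one kernel-verified Lean document; each statement's English description precedes it below -/
import Mathlib

section
/- Useful bits identity for Scheme 1: for N ≥ 2, 1 ≤ j ≤ K, and nonnegative integers υ_1 ≥ ... ≥ υ_K, the quantity N υ_j + ∑_{t=2}^{j} ( N(N−1)^{t−1} υ_j binom(j−1, t−1) + ∑_{i=j+1}^K N(N−1)^{t−1} υ_i binom(i−2, t−2) ) + ∑_{t=j+1}^{K} ∑_{i=t}^{K} N(N−1)^{t−1} υ_i binom(i−2, t−2) equals N^j υ_j + (N−1) ∑_{i=j+1}^K N^{i−1} υ_i. -/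
open Finset

/-!
Both sides are linear in `υ`. By the binomial theorem the coefficient of `υ j` on the left
is `N * ∑ s, (N - 1) ^ s * C(j - 1, s) = N ^ j`. For `i > j`, after exchanging the order of
summation the ranges `t ∈ [2, j]` and `t ∈ [j + 1, i]` join to `t ∈ [2, i]`, and the
coefficient of `υ i` becomes
`N * (N - 1) * ∑ s, (N - 1) ^ s * C(i - 2, s) = (N - 1) * N ^ (i - 1)`.
-/

-- The factor `N` makes this hold also at `N = 0`, where `N - 1` truncates to `0`.
theorem Nat.mul_sum_range_pred_pow_mul_choose (N n : ℕ) :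
    N * ∑ s ∈ range (n + 1), (N - 1) ^ s * n.choose s = N ^ (n + 1) := by
  rcases N with _ | M
  · simp
  · rw [add_tsub_cancel_right, pow_succ', add_pow]
    simp

theorem Nat.sum_Icc_mul_pred_pow_mul_choose (N m n : ℕ) (hm : 1 ≤ m) :
    ∑ t ∈ Icc m (m + n), N * (N - 1) ^ (t - 1) * n.choose (t - m)
      = (N - 1) ^ (m - 1) * N ^ (n + 1) := by
  rw [← Nat.mul_sum_range_pred_pow_mul_choose, ← Ico_add_one_right_eq_Icc,
    sum_Ico_eq_sum_range, add_assoc, add_tsub_cancel_left, mul_sum, mul_sum]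
  refine sum_congr rfl fun s _ => ?_
  rw [add_tsub_cancel_left, show m + s - 1 = m - 1 + s by omega, pow_add]
  ring

theorem Finset.sum_Icc_consecutive {M : Type*} [AddCommMonoid M] (f : ℕ → M) {m n k : ℕ}
    (hmn : m ≤ n + 1) (hnk : n ≤ k) :
    ∑ i ∈ Icc m n, f i + ∑ i ∈ Icc (n + 1) k, f i = ∑ i ∈ Icc m k, f i := by
  simp only [← Ico_add_one_right_eq_Icc]
  exact sum_Ico_consecutive f hmn (by omega)

theorem scheme1_useful_bits_general (N K j : ℕ) (hj1 : 1 ≤ j)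
    (υ : ℕ → ℕ) :
    N * υ j
      + (∑ t ∈ Icc 2 j, (N * (N - 1) ^ (t - 1) * υ j * Nat.choose (j - 1) (t - 1)
          + ∑ i ∈ Icc (j + 1) K, N * (N - 1) ^ (t - 1) * υ i * Nat.choose (i - 2) (t - 2)))
      + ∑ t ∈ Icc (j + 1) K, ∑ i ∈ Icc t K,
          N * (N - 1) ^ (t - 1) * υ i * Nat.choose (i - 2) (t - 2)
    = N ^ j * υ j + (N - 1) * ∑ i ∈ Icc (j + 1) K, N ^ (i - 1) * υ i := by
  have row_j :
      N + ∑ t ∈ Icc 2 j, N * (N - 1) ^ (t - 1) * Nat.choose (j - 1) (t - 1) = N ^ j := by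
    have h := Nat.sum_Icc_mul_pred_pow_mul_choose N 1 (j - 1) le_rfl
    rw [Nat.add_sub_cancel' hj1, Nat.sub_add_cancel hj1, ← add_sum_Ioc_eq_sum_Icc hj1,
      ← Icc_add_one_left_eq_Ioc] at h
    simpa using h
  have row_i (i : ℕ) (hi : j + 1 ≤ i) :
      ∑ t ∈ Icc 2 i, N * (N - 1) ^ (t - 1) * Nat.choose (i - 2) (t - 2)
        = (N - 1) * N ^ (i - 1) := by
    have h := Nat.sum_Icc_mul_pred_pow_mul_choose N 2 (i - 2) one_le_two
    rwa [Nat.add_sub_cancel' (by omega), show i - 2 + 1 = i - 1 by omega, pow_one] at h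
  have diagonal :
      N * υ j + ∑ t ∈ Icc 2 j, N * (N - 1) ^ (t - 1) * υ j * Nat.choose (j - 1) (t - 1)
        = N ^ j * υ j := by
    rw [← row_j, add_mul, sum_mul]
    exact congrArg _ (sum_congr rfl fun t _ => by ring)
  have off_diagonal : ∑ t ∈ Icc 2 j, ∑ i ∈ Icc (j + 1) K,
        N * (N - 1) ^ (t - 1) * υ i * Nat.choose (i - 2) (t - 2)
      + ∑ t ∈ Icc (j + 1) K, ∑ i ∈ Icc t K,
        N * (N - 1) ^ (t - 1) * υ i * Nat.choose (i - 2) (t - 2)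
      = (N - 1) * ∑ i ∈ Icc (j + 1) K, N ^ (i - 1) * υ i := by
    rw [sum_comm, sum_comm' (s := Icc (j + 1) K) (t := fun t => Icc t K) (t' := Icc (j + 1) K)
      (s' := fun i => Icc (j + 1) i) fun t i => by simp only [mem_Icc]; omega,
      ← sum_add_distrib, mul_sum]
    refine sum_congr rfl fun i hi => ?_
    have hi : j + 1 ≤ i := (mem_Icc.mp hi).1
    rw [sum_Icc_consecutive _ (by omega) (by omega), ← mul_assoc, ← row_i i hi, sum_mul]
    exact sum_congr rfl fun t _ => by ring
  rw [sum_add_distrib, ← diagonal, ← off_diagonal]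
  ring

/-- Useful bits identity for semantic PIR Scheme 1. -/
theorem scheme1_useful_bits (N K j : ℕ) (hN : 2 ≤ N) (hj1 : 1 ≤ j) (hjK : j ≤ K)
    (υ : ℕ → ℕ) (hmono : ∀ i i' : ℕ, i ≤ i' → υ i' ≤ υ i) :
    N * υ j
      + (∑ t ∈ Icc 2 j, (N * (N - 1) ^ (t - 1) * υ j * Nat.choose (j - 1) (t - 1)
          + ∑ i ∈ Icc (j + 1) K, N * (N - 1) ^ (t - 1) * υ i * Nat.choose (i - 2) (t - 2)))
      + ∑ t ∈ Icc (j + 1) K, ∑ i ∈ Icc t K,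
          N * (N - 1) ^ (t - 1) * υ i * Nat.choose (i - 2) (t - 2)
    = N ^ j * υ j + (N - 1) * ∑ i ∈ Icc (j + 1) K, N ^ (i - 1) * υ i :=
  scheme1_useful_bits_general N K j hj1 υ
end

section
/- Expected download for Scheme 2: for N ≥ 2, K ≥ 1, and nonnegative reals L_1,...,L_K, (1/N^{K−1}) ∑_{t=1}^{K} ∑_{j=1}^{K−t+1} L_j (N−1)^{t−1} binom(K−j, t−1) = ∑_{j=1}^{K} L_j N^{−(j−1)}. -/
open Finset

/-! Exchanging the two sums, the inner sum over `t` for a fixed message `j` is the binomial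
expansion of `((N - 1) + 1) ^ (K - j) = N ^ (K - j)`. -/

theorem sum_Icc_pow_mul_choose {R : Type*} [CommSemiring R] (x : R) (n : ℕ) :
    ∑ t ∈ Icc 1 (n + 1), x ^ (t - 1) * (n.choose (t - 1) : R) = (x + 1) ^ n := by
  rw [add_pow, ← Ico_add_one_right_eq_Icc, ← Nat.Ico_zero_eq_range]
  simp only [one_pow, mul_one]
  exact sum_Ico_add_right_sub_eq (f := fun t => x ^ t * (n.choose t : R)) 0 (n + 1) 1

theorem sum_Icc_sum_Icc_comm {M : Type*} [AddCommMonoid M] (K : ℕ) (f : ℕ → ℕ → M) :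
    ∑ t ∈ Icc 1 K, ∑ j ∈ Icc 1 (K - t + 1), f t j
      = ∑ j ∈ Icc 1 K, ∑ t ∈ Icc 1 (K - j + 1), f t j :=
  sum_comm' fun t j => by simp only [mem_Icc]; omega

theorem scheme2_expected_download_general (N K : ℕ) (hN : 2 ≤ N)
    (L : ℕ → ℝ) :
    (1 / (N : ℝ) ^ (K - 1)) *
        ∑ t ∈ Icc 1 K, ∑ j ∈ Icc 1 (K - t + 1),
          L j * ((N : ℝ) - 1) ^ (t - 1) * (Nat.choose (K - j) (t - 1) : ℝ)
      = ∑ j ∈ Icc 1 K, L j / (N : ℝ) ^ (j - 1) := by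
  have hN0 : (N : ℝ) ≠ 0 := by exact_mod_cast (by omega : N ≠ 0)
  rw [sum_Icc_sum_Icc_comm, mul_sum]
  refine sum_congr rfl fun j hj => ?_
  obtain ⟨hj1, hjK⟩ := mem_Icc.mp hj
  have hrow : ∑ t ∈ Icc 1 (K - j + 1),
      L j * ((N : ℝ) - 1) ^ (t - 1) * (Nat.choose (K - j) (t - 1) : ℝ) = L j * (N : ℝ) ^ (K - j) := by
    simp_rw [mul_assoc, ← mul_sum, sum_Icc_pow_mul_choose, sub_add_cancel]
  rw [hrow, show K - 1 = (K - j) + (j - 1) by omega, pow_add]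
  field_simp

/-- Expected download identity for semantic PIR Scheme 2. -/
theorem scheme2_expected_download (N K : ℕ) (hN : 2 ≤ N) (hK : 1 ≤ K)
    (L : ℕ → ℝ) (hL : ∀ j, 0 ≤ L j) :
    (1 / (N : ℝ) ^ (K - 1)) *
        ∑ t ∈ Icc 1 K, ∑ j ∈ Icc 1 (K - t + 1),
          L j * ((N : ℝ) - 1) ^ (t - 1) * (Nat.choose (K - j) (t - 1) : ℝ)
      = ∑ j ∈ Icc 1 K, L j / (N : ℝ) ^ (j - 1) :=
  scheme2_expected_download_general N K hN L
end

section
/- Converse bound: under the correctness constraint H(W_i | A_1^{[i]},...,A_N^{[i]}, Q_1^{[i]},...,Q_N^{[i]}) = 0, the privacy constraint that answers for different message indices are identically distributed, and independence of messages with H(W_i) = L_i, any semantic PIR scheme satisfies E[D] ≥ L_{i_1} + L_{i_2}/N + ... + L_{i_K}/N^{K−1} for every permutation (i_1,...,i_K) of (1,...,K), where E[D] = ∑_n H(A_n^{[i]}) (independent of i). -/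
/-! Write `condDownload H i S` for `H(A^[i] | Q^[i], W_S)`, the entropy of all answers for
index `i` given all queries and the messages in `S`. For `i ∉ S`, correctness together with the
independence of messages and queries peels off message `i`:
`L i + condDownload H i (S ∪ {i}) ≤ condDownload H i S`. Privacy, together with each answer
being a function of the messages and its own query, lets the desired index be switched at the
cost of a factor `N`: `condDownload H j S ≤ N * condDownload H i S`. Alternating the two steps
along `σ` gives `∑ₖ L (σ k) / N ^ k ≤ condDownload H (σ 0) ∅ ≤ D`. -/

open Finset

/-- The random variables appearing in a semantic PIR scheme with `N` databases
and `K` messages: the messages `W i`, the queries `Q n i` and the answers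
`A n i` (query/answer of database `n` when the user desires message `i`). -/
inductive PIRVar (N K : ℕ) : Type
  | W : Fin K → PIRVar N K
  | Q : Fin N → Fin K → PIRVar N K
  | A : Fin N → Fin K → PIRVar N K
  deriving DecidableEq

section Polymatroid

variable {α : Type*} [DecidableEq α] (H : Finset α → ℝ)

def IsSubmodular : Prop := ∀ S T : Finset α, H (S ∪ T) + H (S ∩ T) ≤ H S + H T

def condEntropy (A B : Finset α) : ℝ := H (A ∪ B) - H B

variable {H}

theorem IsSubmodular.add_le_add_of_subset (hmono : Monotone H) (hsub : IsSubmodular H)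
    {X Y X' Y' : Finset α} (h₁ : X' ⊆ X ∪ Y) (h₂ : Y' ⊆ X ∩ Y) :
    H X' + H Y' ≤ H X + H Y :=
  (_root_.add_le_add (hmono h₁) (hmono h₂)).trans (hsub X Y)

theorem condEntropy_nonneg (hmono : Monotone H) (A B : Finset α) : 0 ≤ condEntropy H A B :=
  sub_nonneg.2 (hmono subset_union_right)

theorem condEntropy_mono_left (hmono : Monotone H) {A A' : Finset α} (h : A ⊆ A')
    (B : Finset α) : condEntropy H A B ≤ condEntropy H A' B :=
  sub_le_sub_right (hmono (union_subset_union_left h)) _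

theorem condEntropy_anti_right (hmono : Monotone H) (hsub : IsSubmodular H)
    (A : Finset α) {B B' : Finset α} (h : B' ⊆ B) :
    condEntropy H A B ≤ condEntropy H A B' := by
  have := hsub.add_le_add_of_subset hmono (X := A ∪ B') (Y := B) (X' := A ∪ B) (Y' := B')
    (by grind) (by grind)
  unfold condEntropy
  linarith

theorem condEntropy_le (hmono : Monotone H) (hsub : IsSubmodular H) (h0 : H ∅ = 0)
    (A B : Finset α) : condEntropy H A B ≤ H A := by
  have := hsub.add_le_add_of_subset hmono (X := A) (Y := B) (X' := A ∪ B) (Y' := ∅)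
    subset_rfl (empty_subset _)
  unfold condEntropy
  linarith

theorem condEntropy_image_le_sum (hmono : Monotone H) (hsub : IsSubmodular H)
    {ι : Type*} (f : ι → α) (s : Finset ι) (B : Finset α) :
    condEntropy H (s.image f) B ≤ ∑ n ∈ s, condEntropy H {f n} B := by
  classical
  induction s using Finset.induction_on with
  | empty => simp [condEntropy]
  | @insert a s ha ih =>
    rw [image_insert, sum_insert ha]
    have := hsub.add_le_add_of_subset hmono (X := {f a} ∪ B) (Y := s.image f ∪ B)
      (X' := insert (f a) (s.image f) ∪ B) (Y' := B) (by grind) (by grind)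
    unfold condEntropy at ih ⊢
    linarith

end Polymatroid

theorem sum_div_pow_le_of_peel {ι : Type*} [DecidableEq ι] {g : ι → Finset ι → ℝ}
    {L : ι → ℝ} {c : ℝ} (hc : 0 ≤ c) (hg : ∀ i S, 0 ≤ g i S)
    (hswitch : ∀ i j S, g j S ≤ c * g i S)
    (hpeel : ∀ i S, i ∉ S → L i + g i (insert i S) ≤ g i S) :
    ∀ (m : ℕ) (f : Fin (m + 1) → ι), Function.Injective f → ∀ S, (∀ k, f k ∉ S) →
      ∑ k, L (f k) / c ^ (k : ℕ) ≤ g (f 0) S := by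
  intro m
  induction m with
  | zero =>
    intro f _ S hS
    have := hpeel (f 0) S (hS 0)
    simpa using this.trans' (le_add_of_nonneg_right (hg _ _))
  | succ m ih =>
    intro f hf S hS
    have htail : ∑ k : Fin (m + 1), L (f k.succ) / c ^ (k : ℕ) ≤ c * g (f 0) (insert (f 0) S) :=
      (ih (f ∘ Fin.succ) (hf.comp (Fin.succ_injective _)) (insert (f 0) S) fun k hk => by
        rcases mem_insert.1 hk with h | h
        · exact Fin.succ_ne_zero k (hf h)
        · exact hS _ h).trans (hswitch _ _ _)
    rw [Fin.sum_univ_succ]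
    calc L (f 0) / c ^ ((0 : Fin (m + 2)) : ℕ) + ∑ k : Fin (m + 1), L (f k.succ) / c ^ (k.succ : ℕ)
        = L (f 0) + (∑ k : Fin (m + 1), L (f k.succ) / c ^ (k : ℕ)) / c := by
          simp [sum_div, pow_succ, div_div]
      _ ≤ L (f 0) + g (f 0) (insert (f 0) S) := by
          gcongr; exact div_le_of_le_mul₀ hc (hg _ _) (htail.trans_eq (mul_comm _ _))
      _ ≤ g (f 0) S := hpeel _ _ (hS 0)

namespace PIRVar

variable {N K : ℕ}

def msgs (S : Finset (Fin K)) : Finset (PIRVar N K) := S.image W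

def queries (i : Fin K) : Finset (PIRVar N K) := univ.image fun n => Q n i

def answers (i : Fin K) : Finset (PIRVar N K) := univ.image fun n => A n i

def MessagesIndependent (H : Finset (PIRVar N K) → ℝ) (L : Fin K → ℝ) : Prop :=
  ∀ S : Finset (Fin K), H (S.image W) = ∑ i ∈ S, L i

def QueriesIndependent (H : Finset (PIRVar N K) → ℝ) : Prop :=
  ∀ (i : Fin K) (T : Finset (Fin N)) (S : Finset (Fin K)),
    H (S.image W ∪ T.image (fun n => Q n i)) = H (S.image W) + H (T.image (fun n => Q n i))

def AnswersDeterministic (H : Finset (PIRVar N K) → ℝ) : Prop :=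
  ∀ (n : Fin N) (i : Fin K),
    H (insert (A n i) (insert (Q n i) ((univ : Finset (Fin K)).image W)))
      = H (insert (Q n i) ((univ : Finset (Fin K)).image W))

def Correct (H : Finset (PIRVar N K) → ℝ) : Prop :=
  ∀ i : Fin K,
    H (insert (W i)
        ((univ : Finset (Fin N)).image (fun n => Q n i)
          ∪ (univ : Finset (Fin N)).image (fun n => A n i)))
      = H ((univ : Finset (Fin N)).image (fun n => Q n i)
          ∪ (univ : Finset (Fin N)).image (fun n => A n i))

def AnswersPrivate (H : Finset (PIRVar N K) → ℝ) : Prop :=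
  ∀ (n : Fin N) (i j : Fin K) (S : Finset (Fin K)),
    H (insert (A n i) (insert (Q n i) (S.image W))) - H (insert (Q n i) (S.image W))
      = H (insert (A n j) (insert (Q n j) (S.image W))) - H (insert (Q n j) (S.image W))

def condDownload (H : Finset (PIRVar N K) → ℝ) (i : Fin K) (S : Finset (Fin K)) : ℝ :=
  condEntropy H (answers i) (queries i ∪ msgs S)

variable {H : Finset (PIRVar N K) → ℝ}

theorem QueriesIndependent.queries_union_msgs (hq : QueriesIndependent H) (i : Fin K)
    (S : Finset (Fin K)) : H (queries i ∪ msgs S) = H (queries i) + H (msgs S) := by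
  rw [union_comm, add_comm]
  exact hq i univ S

theorem QueriesIndependent.insert_query_msgs (hq : QueriesIndependent H) (n : Fin N) (i : Fin K)
    (S : Finset (Fin K)) : H (insert (Q n i) (msgs S)) = H {Q n i} + H (msgs S) := by
  have := hq i {n} S
  rwa [image_singleton, union_comm, ← insert_eq, add_comm] at this

/-- Given all messages, `A n i` is a function of `Q n i`, and the queries are independent of
the messages, so the other queries say nothing more about `A n i`. -/
theorem condEntropy_answer_le_of_queries (hmono : Monotone H) (hsub : IsSubmodular H)
    (hq : QueriesIndependent H) (hdet : AnswersDeterministic H)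
    (n : Fin N) (i : Fin K) (S : Finset (Fin K)) :
    condEntropy H {A n i} (insert (Q n i) (msgs S))
      ≤ condEntropy H {A n i} (queries i ∪ msgs S) := by
  have hqn : Q n i ∈ queries i := mem_image_of_mem _ (mem_univ n)
  have hS : msgs S ⊆ (msgs univ : Finset (PIRVar N K)) := image_subset_image (subset_univ S)
  have hunion := hsub.add_le_add_of_subset hmono
    (X := insert (A n i) (insert (Q n i) (msgs univ)))
    (Y := insert (A n i) (queries i ∪ msgs S))
    (X' := insert (A n i) (queries i ∪ msgs univ))
    (Y' := insert (A n i) (insert (Q n i) (msgs S)))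
    (by grind) (by grind)
  have hall : H (queries i ∪ msgs univ) ≤ H (insert (A n i) (queries i ∪ msgs univ)) :=
    hmono (subset_insert _ _)
  have := hdet n i
  have := hq.queries_union_msgs i univ
  have := hq.queries_union_msgs i S
  have := hq.insert_query_msgs n i univ
  have := hq.insert_query_msgs n i S
  simp only [condEntropy, singleton_union]
  unfold msgs at *
  linarith

theorem condDownload_le_mul (hmono : Monotone H) (hsub : IsSubmodular H)
    (hq : QueriesIndependent H) (hdet : AnswersDeterministic H) (hpriv : AnswersPrivate H)
    (i j : Fin K) (S : Finset (Fin K)) :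
    condDownload H j S ≤ N * condDownload H i S := by
  have hdb : ∀ n, condEntropy H {A n j} (queries j ∪ msgs S) ≤ condDownload H i S := fun n =>
    calc condEntropy H {A n j} (queries j ∪ msgs S)
        ≤ condEntropy H {A n j} (insert (Q n j) (msgs S)) :=
          condEntropy_anti_right hmono hsub _
            (insert_subset (mem_union_left _ (mem_image_of_mem _ (mem_univ n))) subset_union_right)
      _ = condEntropy H {A n i} (insert (Q n i) (msgs S)) := by
          simp only [condEntropy, singleton_union]
          exact hpriv n j i S
      _ ≤ condEntropy H {A n i} (queries i ∪ msgs S) :=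
          condEntropy_answer_le_of_queries hmono hsub hq hdet n i S
      _ ≤ condDownload H i S := by
          apply condEntropy_mono_left hmono
          exact singleton_subset_iff.2 (mem_image_of_mem _ (mem_univ n))
  calc condDownload H j S ≤ ∑ n, condEntropy H {A n j} (queries j ∪ msgs S) :=
        condEntropy_image_le_sum hmono hsub _ _ _
    _ ≤ ∑ _n : Fin N, condDownload H i S := sum_le_sum fun n _ => hdb n
    _ = N * condDownload H i S := by simp

theorem add_condDownload_insert_le {L : Fin K → ℝ} (hmono : Monotone H) (hsub : IsSubmodular H)
    (hmsg : MessagesIndependent H L) (hq : QueriesIndependent H) (hcorrect : Correct H)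
    {i : Fin K} {S : Finset (Fin K)} (hi : i ∉ S) :
    L i + condDownload H i (insert i S) ≤ condDownload H i S := by
  have hWi : condEntropy H {W i} (answers i ∪ (queries i ∪ msgs S)) ≤ 0 :=
    calc _ ≤ condEntropy H {W i} (queries i ∪ answers i) :=
          condEntropy_anti_right hmono hsub _ (by grind)
      _ = 0 := by
          simp only [condEntropy, singleton_union, sub_eq_zero]
          exact hcorrect i
  have hmsgs : msgs (insert i S) = insert (W i) (msgs S : Finset (PIRVar N K)) := image_insert ..
  have hset : (answers i ∪ (queries i ∪ msgs (insert i S)) : Finset (PIRVar N K))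
      = {W i} ∪ (answers i ∪ (queries i ∪ msgs S)) := by
    rw [hmsgs]; grind
  have := hq.queries_union_msgs i (insert i S)
  have := hq.queries_union_msgs i S
  have := hmsg S
  have := hmsg (insert i S)
  rw [sum_insert hi] at this
  simp only [condDownload, condEntropy, hset] at hWi ⊢
  unfold msgs at *
  linarith

theorem condDownload_empty_le (hmono : Monotone H) (hsub : IsSubmodular H) (h0 : H ∅ = 0)
    (i : Fin K) : condDownload H i ∅ ≤ ∑ n, H {A n i} :=
  (condEntropy_image_le_sum hmono hsub _ _ _).trans
    (sum_le_sum fun _ _ => condEntropy_le hmono hsub h0 _ _)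

end PIRVar

open PIRVar

theorem semantic_pir_converse_general (N K : ℕ) (hK : 1 ≤ K)
    (L : Fin K → ℝ)
    (H : Finset (PIRVar N K) → ℝ)
    -- polymatroid (Shannon) axioms
    (hH0 : H ∅ = 0)
    (hmono : ∀ S T : Finset (PIRVar N K), S ⊆ T → H S ≤ H T)
    (hsub : ∀ S T : Finset (PIRVar N K), H (S ∪ T) + H (S ∩ T) ≤ H S + H T)
    -- messages are independent with `H(W i) = L i`
    (hmsg : ∀ S : Finset (Fin K), H (S.image PIRVar.W) = ∑ i ∈ S, L i)
    -- queries are independent of the messages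
    (hqindep : ∀ (i : Fin K) (T : Finset (Fin N)) (S : Finset (Fin K)),
      H (S.image PIRVar.W ∪ T.image (fun n => PIRVar.Q n i))
        = H (S.image PIRVar.W) + H (T.image (fun n => PIRVar.Q n i)))
    -- answers are deterministic functions of all messages and the query
    (hdet : ∀ (n : Fin N) (i : Fin K),
      H (insert (PIRVar.A n i)
          (insert (PIRVar.Q n i) ((univ : Finset (Fin K)).image PIRVar.W)))
        = H (insert (PIRVar.Q n i) ((univ : Finset (Fin K)).image PIRVar.W)))
    -- correctness: the desired message is determined by all queries and answers
    (hcorrect : ∀ i : Fin K,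
      H (insert (PIRVar.W i)
          ((univ : Finset (Fin N)).image (fun n => PIRVar.Q n i)
            ∪ (univ : Finset (Fin N)).image (fun n => PIRVar.A n i)))
        = H ((univ : Finset (Fin N)).image (fun n => PIRVar.Q n i)
            ∪ (univ : Finset (Fin N)).image (fun n => PIRVar.A n i)))
    -- privacy: `H(Aₙ^[i] | Qₙ^[i], W_S) = H(Aₙ^[j] | Qₙ^[j], W_S)` for all `S`
    (hpriv : ∀ (n : Fin N) (i j : Fin K) (S : Finset (Fin K)),
      H (insert (PIRVar.A n i) (insert (PIRVar.Q n i) (S.image PIRVar.W)))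
          - H (insert (PIRVar.Q n i) (S.image PIRVar.W))
        = H (insert (PIRVar.A n j) (insert (PIRVar.Q n j) (S.image PIRVar.W)))
          - H (insert (PIRVar.Q n j) (S.image PIRVar.W)))
    -- the download cost, independent of the desired index by privacy
    (D : ℝ) (hD : ∀ i : Fin K, D = ∑ n : Fin N, H {PIRVar.A n i}) :
    ∀ σ : Equiv.Perm (Fin K),
      D ≥ ∑ k : Fin K, L (σ k) / (N : ℝ) ^ (k : ℕ) := by
  intro σ
  have hmono' : Monotone H := fun S T h => hmono S T h
  obtain ⟨m, rfl⟩ : ∃ m, K = m + 1 := Nat.exists_eq_add_of_le' hK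
  calc ∑ k, L (σ k) / (N : ℝ) ^ (k : ℕ)
      ≤ condDownload H (σ 0) ∅ :=
        sum_div_pow_le_of_peel (Nat.cast_nonneg N) (fun _ _ => condEntropy_nonneg hmono' _ _)
          (condDownload_le_mul hmono' hsub hqindep hdet hpriv)
          (fun _ _ hi => add_condDownload_insert_le hmono' hsub hmsg hqindep hcorrect hi)
          m σ σ.injective ∅ fun _ => notMem_empty _
    _ ≤ ∑ n, H {A n (σ 0)} := condDownload_empty_le hmono' hsub hH0 _
    _ = D := (hD _).symm

/-- Converse bound for semantic PIR. `H` is the joint Shannon entropy of a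
set of the system's random variables, assumed to satisfy the polymatroid
axioms (normalized, monotone, submodular) together with the constraints of a
semantic PIR scheme: independent messages of entropies `L i`, queries
independent of messages, deterministic answers, correctness, and privacy.
Then the (index-independent) download cost `D = ∑ₙ H(Aₙ)` satisfies
`D ≥ ∑ₖ L_{i_k} / N^{k-1}` for every permutation `(i_1, …, i_K)`. -/
theorem semantic_pir_converse (N K : ℕ) (hN : 1 ≤ N) (hK : 1 ≤ K)
    (L : Fin K → ℝ) (hL : ∀ i, 0 ≤ L i)
    (H : Finset (PIRVar N K) → ℝ)
    -- polymatroid (Shannon) axioms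
    (hH0 : H ∅ = 0)
    (hmono : ∀ S T : Finset (PIRVar N K), S ⊆ T → H S ≤ H T)
    (hsub : ∀ S T : Finset (PIRVar N K), H (S ∪ T) + H (S ∩ T) ≤ H S + H T)
    -- messages are independent with `H(W i) = L i`
    (hmsg : ∀ S : Finset (Fin K), H (S.image PIRVar.W) = ∑ i ∈ S, L i)
    -- queries are independent of the messages
    (hqindep : ∀ (i : Fin K) (T : Finset (Fin N)) (S : Finset (Fin K)),
      H (S.image PIRVar.W ∪ T.image (fun n => PIRVar.Q n i))
        = H (S.image PIRVar.W) + H (T.image (fun n => PIRVar.Q n i)))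
    -- answers are deterministic functions of all messages and the query
    (hdet : ∀ (n : Fin N) (i : Fin K),
      H (insert (PIRVar.A n i)
          (insert (PIRVar.Q n i) ((univ : Finset (Fin K)).image PIRVar.W)))
        = H (insert (PIRVar.Q n i) ((univ : Finset (Fin K)).image PIRVar.W)))
    -- correctness: the desired message is determined by all queries and answers
    (hcorrect : ∀ i : Fin K,
      H (insert (PIRVar.W i)
          ((univ : Finset (Fin N)).image (fun n => PIRVar.Q n i)
            ∪ (univ : Finset (Fin N)).image (fun n => PIRVar.A n i)))
        = H ((univ : Finset (Fin N)).image (fun n => PIRVar.Q n i)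
            ∪ (univ : Finset (Fin N)).image (fun n => PIRVar.A n i)))
    -- privacy: `H(Aₙ^[i] | Qₙ^[i], W_S) = H(Aₙ^[j] | Qₙ^[j], W_S)` for all `S`
    (hpriv : ∀ (n : Fin N) (i j : Fin K) (S : Finset (Fin K)),
      H (insert (PIRVar.A n i) (insert (PIRVar.Q n i) (S.image PIRVar.W)))
          - H (insert (PIRVar.Q n i) (S.image PIRVar.W))
        = H (insert (PIRVar.A n j) (insert (PIRVar.Q n j) (S.image PIRVar.W)))
          - H (insert (PIRVar.Q n j) (S.image PIRVar.W)))
    -- privacy: the marginal answer entropies do not depend on the index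
    (hansmarg : ∀ (n : Fin N) (i j : Fin K),
      H {PIRVar.A n i} = H {PIRVar.A n j})
    -- the download cost, independent of the desired index by privacy
    (D : ℝ) (hD : ∀ i : Fin K, D = ∑ n : Fin N, H {PIRVar.A n i}) :
    ∀ σ : Equiv.Perm (Fin K),
      D ≥ ∑ k : Fin K, L (σ k) / (N : ℝ) ^ (k : ℕ) :=
  semantic_pir_converse_general N K hK L H hH0 hmono hsub hmsg hqindep hdet hcorrect hpriv D hD
end
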